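/- arXiv:2007.10094 — 2 statements merged into one kernel-verified Lean document; each statement's English description precedes it below -/
import Mathlib

section
/- Let p be a prime, G a finite abelian p-group, and U a minimal zero-sum sequence over G of length D(G). Then supp(U) contains an element of order exp(G). -/
/-!
If no term of `U` has order `exp(G) = p ^ k`, then `φ = p ^ (k - 1) • ·` kills `U`, while
`h = φ g` has order `p` for an element `g` of maximal order. Replacing one term `u` of `U` by the
`p` terms `u + g - p • g, g, …, g`, all sent to `h` by `φ`, gives a zero-sum sequence `W`. A
zero-sum subsequence of `W` has image `n • h` under `φ`, where `n` is the number of new terms it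
uses, so `p ∣ n` and it uses none or all of them; minimality of `U` then forces it to be empty or
all of `W`. Thus `W` is a minimal zero-sum sequence of length `|U| + p - 1 > D(G)`.
-/

def IsMinZeroSum {G : Type*} [AddCommGroup G] (S : Multiset G) : Prop :=
  S ≠ 0 ∧ S.sum = 0 ∧ ∀ T : Multiset G, T ≤ S → T ≠ 0 → T ≠ S → T.sum ≠ 0

noncomputable def Dav (G : Type*) [AddCommGroup G] [Fintype G] : ℕ :=
  sSup {n : ℕ | ∃ S : Multiset G, IsMinZeroSum S ∧ Multiset.card S = n}

lemma Nat.dvd_prime_pow_pred_of_ne {p k n : ℕ} (hp : p.Prime) (hn : n ∣ p ^ k)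
    (hne : n ≠ p ^ k) : n ∣ p ^ (k - 1) := by
  obtain ⟨j, hjk, rfl⟩ := (Nat.dvd_prime_pow hp).1 hn
  have hj : j ≠ k := by rintro rfl; exact hne rfl
  exact Nat.pow_dvd_pow p (by omega)

lemma AddMonoid.exists_exponent_eq_prime_pow {G : Type*} [AddCancelCommMonoid G] [Finite G]
    {p : ℕ} (hp : p.Prime) (hG : ∀ g : G, ∃ n : ℕ, p ^ n • g = 0) :
    ∃ k, AddMonoid.exponent G = p ^ k := by
  obtain ⟨g, hg⟩ :=
    AddMonoid.exists_addOrderOf_eq_exponent (AddMonoid.ExponentExists.of_finite (G := G))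
  obtain ⟨n, hn⟩ := hG g
  obtain ⟨k, -, hk⟩ := (Nat.dvd_prime_pow hp).1 (addOrderOf_dvd_of_nsmul_eq_zero hn)
  exact ⟨k, hg ▸ hk⟩

namespace IsMinZeroSum

open Multiset

variable {G H : Type*} [AddCommGroup G] [AddCommGroup H]

lemma eq_of_le {S T : Multiset G} (hS : IsMinZeroSum S) (hTS : T ≤ S) (hT : T ≠ 0)
    (hsum : T.sum = 0) : T = S := by
  by_contra hne
  exact hS.2.2 T hTS hT hne hsum

lemma sum_take_ne {L : List G} (hL : IsMinZeroSum (L : Multiset G)) {i j : ℕ} (hij : i < j)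
    (hj : j < L.length) : (L.take i).sum ≠ (L.take j).sum := by
  intro hsum
  set B := (L.take j).drop i
  have hB : (L.take j).sum = (L.take i).sum + B.sum := by
    rw [← List.sum_take_add_sum_drop (L.take j) i, List.take_take, min_eq_left hij.le]
  have hBlen : B.length = j - i := by simp [B]; omega
  have hBL : (B : Multiset G) ≤ L :=
    coe_le.2 ((List.drop_sublist _ _).trans (List.take_sublist _ _)).subperm
  have hB0 : (B : Multiset G) ≠ 0 := by
    rw [Ne, coe_eq_zero, ← List.length_eq_zero_iff]; omega
  have hBsum : B.sum = 0 := left_eq_add.1 (hsum ▸ hB)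
  have := congrArg card (hL.eq_of_le hBL hB0 (by rwa [sum_coe]))
  simp only [coe_card] at this
  omega

lemma card_le_fintype_card [Fintype G] {S : Multiset G} (hS : IsMinZeroSum S) :
    card S ≤ Fintype.card G := by
  induction S using Quotient.inductionOn with
  | h L =>
    have hinj : Function.Injective fun i : Fin L.length => (L.take i).sum := by
      intro i j hij
      by_contra hne
      rcases Nat.lt_or_gt_of_ne (Fin.val_injective.ne hne) with h | h
      · exact hS.sum_take_ne h j.2 hij
      · exact hS.sum_take_ne h i.2 hij.symm
    simpa using Fintype.card_le_of_injective _ hinj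

lemma card_le_dav [Fintype G] {S : Multiset G} (hS : IsMinZeroSum S) : card S ≤ Dav G :=
  le_csSup ⟨Fintype.card G, fun _ ⟨_, hT, hn⟩ => hn ▸ hT.card_le_fintype_card⟩ ⟨S, hS, rfl⟩

lemma map_sum_of_le {A T : Multiset G} (φ : G →+ H) {h : H} (hφA : ∀ a ∈ A, φ a = h)
    (hTA : T ≤ A) : φ T.sum = card T • h := by
  rw [map_multiset_sum, map_congr rfl fun a ha => hφA a (mem_of_le hTA ha), map_const',
    sum_replicate]

theorem add_erase [DecidableEq G] {U A : Multiset G} {u : G} (hU : IsMinZeroSum U) (hu : u ∈ U)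
    (φ : G →+ H) (hφU : ∀ x ∈ U, φ x = 0) {h : H} (hφA : ∀ a ∈ A, φ a = h) (hA : A ≠ 0)
    (hord : addOrderOf h = card A) (hsum : A.sum = u) : IsMinZeroSum (A + U.erase u) := by
  have hUu : u ::ₘ U.erase u = U := cons_erase hu
  refine ⟨by simp [hA], by rw [sum_add, hsum, ← sum_cons, hUu, hU.2.1],
    fun T hTW hT0 hTW' hT ↦ ?_⟩
  have hnew : T ∩ A ≤ A := inter_le_right
  have hold : T - A ≤ U.erase u := tsub_le_iff_left.2 hTW
  have hsplit : T - A + T ∩ A = T := sub_add_inter T A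
  have hφT : card (T ∩ A) • h = 0 := by
    have := congrArg (φ ∘ sum) hsplit
    rwa [Function.comp_apply, Function.comp_apply, sum_add, _root_.map_add,
      map_sum_of_le φ (fun x hx ↦ hφU x (mem_of_mem_erase hx)) hold, map_sum_of_le φ hφA hnew,
      hT, _root_.map_zero, nsmul_zero, zero_add] at this
  have hdvd : card A ∣ card (T ∩ A) := hord ▸ addOrderOf_dvd_of_nsmul_eq_zero hφT
  rcases Nat.eq_zero_or_pos (card (T ∩ A)) with hzero | hpos
  · have hTU : T ≤ U.erase u := by rwa [← hsplit, card_eq_zero.1 hzero, add_zero]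
    have hcard := Multiset.card_le_card hTU
    rw [hU.eq_of_le (hTU.trans (erase_le u U)) hT0 hT, card_erase_of_mem hu,
      Nat.pred_eq_sub_one] at hcard
    have := card_pos.2 hU.1
    omega
  · have hTA : T ∩ A = A := eq_of_le_of_card_le hnew (Nat.le_of_dvd hpos hdvd)
    rw [hTA] at hsplit
    have hcons : u ::ₘ (T - A) = U := by
      refine hU.eq_of_le (hUu ▸ cons_le_cons u hold) cons_ne_zero ?_
      rw [sum_cons, ← hsum, add_comm, ← sum_add, hsplit, hT]
    have hold_eq : T - A = U.erase u := (cons_inj_right u).1 (hcons.trans hUu.symm)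
    exact hTW' (by rw [← hsplit, hold_eq, add_comm])

theorem exists_card_add [DecidableEq G] {U : Multiset G} {u : G} (hU : IsMinZeroSum U)
    (hu : u ∈ U) (φ : G →+ H) (hφU : ∀ x ∈ U, φ x = 0) {g : G} (hg : 0 < addOrderOf (φ g)) :
    ∃ W : Multiset G, IsMinZeroSum W ∧ card W + 1 = card U + addOrderOf (φ g) := by
  set n := addOrderOf (φ g)
  set A := (u + g - n • g) ::ₘ replicate (n - 1) g
  have hcard : card A = n := by simp [A]; omega
  have hφA : ∀ a ∈ A, φ a = φ g := by
    simp only [A, mem_cons, mem_replicate]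
    rintro a (rfl | ⟨-, rfl⟩)
    · simp [hφU u hu, n, addOrderOf_nsmul_eq_zero]
    · rfl
  have hsum : A.sum = u := by
    have hn : n • g = (n - 1) • g + g := by rw [← succ_nsmul, Nat.sub_add_cancel hg]
    simp only [A, sum_cons, sum_replicate, hn]
    abel
  refine ⟨A + U.erase u, hU.add_erase hu φ hφU hφA (by simp [A]) hcard.symm hsum, ?_⟩
  rw [card_add, hcard, card_erase_of_mem hu, Nat.pred_eq_sub_one]
  have := card_pos.2 hU.1
  omega

end IsMinZeroSum

theorem stmt_10 {G : Type*} [AddCommGroup G] [Fintype G] (p : ℕ) (hp : p.Prime)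
    (hpgroup : ∀ g : G, ∃ n : ℕ, p ^ n • g = 0)
    (U : Multiset G) (hU : IsMinZeroSum U) (hlen : Multiset.card U = Dav G) :
    ∃ g ∈ U, addOrderOf g = AddMonoid.exponent G := by
  classical
  by_contra! hcon
  obtain ⟨k, hk⟩ := AddMonoid.exists_exponent_eq_prime_pow hp hpgroup
  obtain ⟨g, hg⟩ :=
    AddMonoid.exists_addOrderOf_eq_exponent (AddMonoid.ExponentExists.of_finite (G := G))
  rw [hk] at hg hcon
  have hkill : ∀ x ∈ U, p ^ (k - 1) • x = 0 := fun x hx ↦ addOrderOf_dvd_iff_nsmul_eq_zero.1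
    (Nat.dvd_prime_pow_pred_of_ne hp (hk ▸ AddMonoid.addOrder_dvd_exponent x) (hcon x hx))
  obtain ⟨u, hu⟩ := Multiset.exists_mem_of_ne_zero hU.1
  have hk0 : k ≠ 0 := by
    rintro rfl
    exact hcon u hu (by simpa using hkill u hu)
  have hgp : addOrderOf (p ^ (k - 1) • g) = p := by
    have hle : k - 1 ≤ k := Nat.sub_le k 1
    rw [addOrderOf_nsmul_of_dvd (pow_ne_zero _ hp.ne_zero) (hg ▸ Nat.pow_dvd_pow p hle), hg,
      Nat.pow_div hle hp.pos, Nat.sub_sub_self (Nat.one_le_iff_ne_zero.2 hk0), pow_one]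
  obtain ⟨W, hW, hcard⟩ := hU.exists_card_add hu (nsmulAddMonoidHom (p ^ (k - 1))) hkill
    (g := g) (by simpa [hgp] using hp.pos)
  have := hW.card_le_dav
  simp only [nsmulAddMonoidHom_apply, hgp] at hcard
  have := hp.two_le
  omega
end

section
/- Let G be a finite abelian group with exponent n = exp(G) and suppose G is a direct sum G = G_1 ⊕ ⟨h⟩ with ord(h) = n, G_1 ≅ C_2^s. Let g ∈ G with g ∉ ⟨h⟩ and 2g ∈ ⟨h⟩ and ord(g) = n = 2p (p an odd prime). Then there exists k ∈ [1, 2p−1] such that g²h^k and (−g)²h^{2p−k} are minimal zero-sum sequences, and the product (g²h^k)((−g)²h^{2p−k}) = (g(−g))² h^{2p} exhibits an element of B({g, −g, h, −h}) with factorization lengths 2 and 3, whence min Δ({g, −g, h}) = 1. -/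
/-- The set of factorization lengths of a zero-sum sequence `A` into minimal
zero-sum sequences with all terms in `G₀`. -/
def LengthsOf {G : Type*} [AddCommGroup G] (G₀ : Set G) (A : Multiset G) : Set ℕ :=
  {k | ∃ fac : Multiset (Multiset G), Multiset.card fac = k ∧
        (∀ V ∈ fac, IsMinZeroSum V ∧ ∀ x ∈ V, x ∈ G₀) ∧ fac.sum = A}

/-- The set of (successive) distances of the monoid of zero-sum sequences over `G₀`. -/
def DeltaSet {G : Type*} [AddCommGroup G] (G₀ : Set G) : Set ℕ :=
  {d | 0 < d ∧ ∃ (A : Multiset G) (k : ℕ), k ∈ LengthsOf G₀ A ∧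
        k + d ∈ LengthsOf G₀ A ∧ ∀ j, k < j → j < k + d → j ∉ LengthsOf G₀ A}

/-! Since `2g` lies in `⟨h⟩` but `g` does not, `2g + kh = 0` for some `0 < k < ord h`, and then
`g²hᵏ` and `(-g)²h^(ord h - k)` are atoms: a proper zero-sum subsequence would contain `g` exactly
once (forcing `g ∈ ⟨h⟩`), or be `hʲ` with `0 < j < ord h`, or `g²hʲ` with `j < k`, whose sum
differs from that of `g²hᵏ` by the nonzero `(k - j)h`.
Their product `g²(-g)²h^(ord h)` also factors into the three atoms `g(-g)`, `g(-g)`, `h^(ord h)`,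
so it has the lengths `2` and `3`, and the distance `1` occurs. -/

open Multiset

theorem Multiset.exists_eq_replicate_add_replicate_of_le {α : Type*} [DecidableEq α] {a b : α}
    (hab : a ≠ b) {m n : ℕ} {T : Multiset α} (hT : T ≤ replicate m a + replicate n b) :
    ∃ i ≤ m, ∃ j ≤ n, T = replicate i a + replicate j b := by
  have hc := le_iff_count.1 hT
  refine ⟨T.count a, by simpa [count_replicate, hab.symm] using hc a, T.count b,
    by simpa [count_replicate, hab] using hc b, ext.2 fun x => ?_⟩
  have := hc x
  simp only [count_add, count_replicate] at this ⊢
  split_ifs at this ⊢ <;> grind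

theorem Multiset.replicate_add_replicate_add_replicate_add_replicate {α : Type*} (x y z : α)
    {a b k n : ℕ} (hk : k ≤ n) :
    (replicate a x + replicate k z) + (replicate b y + replicate (n - k) z) =
      (replicate a x + replicate b y) + replicate n z := by
  rw [add_add_add_comm, ← replicate_add, Nat.add_sub_cancel' hk]

theorem exists_lt_addOrderOf_nsmul_eq {G : Type*} [AddGroup G] {h y : G} (hh : addOrderOf h ≠ 0)
    (hy : y ∈ AddSubgroup.zmultiples h) : ∃ k < addOrderOf h, k • h = y := by
  have hfin : IsOfFinAddOrder h := addOrderOf_pos_iff.1 (Nat.pos_of_ne_zero hh)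
  obtain ⟨n, rfl⟩ := (AddSubmonoid.mem_multiples_iff _ _).1
    (hfin.mem_multiples_iff_mem_zmultiples.2 hy)
  exact ⟨n % addOrderOf h, Nat.mod_lt _ (Nat.pos_of_ne_zero hh), mod_addOrderOf_nsmul h n⟩

section ZeroSum

variable {G : Type*} [AddCommGroup G]

theorem isMinZeroSum_replicate_addOrderOf {h : G} (hh : addOrderOf h ≠ 0) :
    IsMinZeroSum (replicate (addOrderOf h) h) := by
  refine ⟨fun h0 => hh (by simpa using congrArg card h0), by simp, fun T hT hT0 hTS hsum => ?_⟩
  obtain ⟨m, hm, rfl⟩ := le_replicate_iff.1 hT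
  have hm0 : m ≠ 0 := by rintro rfl; exact hT0 rfl
  have hmlt : m < addOrderOf h := lt_of_le_of_ne hm (by rintro rfl; exact hTS rfl)
  exact nsmul_ne_zero_of_lt_addOrderOf hm0 hmlt (by simpa using hsum)

theorem isMinZeroSum_pair_neg {g : G} (hg : g ≠ 0) : IsMinZeroSum ({g, -g} : Multiset G) := by
  refine ⟨by simp, by simp, fun T hT hT0 hTS hsum => ?_⟩
  have hcard : card T = 1 := by
    have hle : card T ≤ 2 := by simpa using card_le_card hT
    have hne0 : card T ≠ 0 := by simpa using hT0
    have hne2 : card T ≠ 2 := fun h2 => hTS (eq_of_le_of_card_le hT (by simp [h2]))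
    omega
  obtain ⟨x, rfl⟩ := card_eq_one.1 hcard
  have hx : x = g ∨ x = -g := by simpa using singleton_le.1 hT
  rcases hx with rfl | rfl <;> simp_all

theorem isMinZeroSum_replicate_two_add_replicate {g h : G} {k : ℕ}
    (hg : g ∉ AddSubgroup.zmultiples h) (hk : k < addOrderOf h)
    (hsum : 2 • g + k • h = 0) : IsMinZeroSum (replicate 2 g + replicate k h) := by
  classical
  have hgh : g ≠ h := fun e => hg (e ▸ AddSubgroup.mem_zmultiples h)
  refine ⟨by simp, by rwa [sum_add, sum_replicate, sum_replicate], fun T hT hT0 hTS hTsum => ?_⟩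
  obtain ⟨i, hi, j, hj, rfl⟩ := exists_eq_replicate_add_replicate_of_le hgh hT
  simp only [sum_add, sum_replicate] at hTsum
  interval_cases i
  · rw [zero_nsmul, zero_add] at hTsum
    have hj0 : j = 0 := by
      by_contra hj0
      exact nsmul_ne_zero_of_lt_addOrderOf hj0 (by omega) hTsum
    exact hT0 (by simp [hj0])
  · rw [one_nsmul] at hTsum
    exact hg (eq_neg_of_add_eq_zero_left hTsum ▸ neg_mem (AddSubgroup.nsmul_mem_zmultiples h j))
  · have hkj : (k - j) • h = 0 := by
      rw [sub_nsmul h hj, ← neg_eq_of_add_eq_zero_right hsum,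
        ← neg_eq_of_add_eq_zero_right hTsum, add_neg_cancel]
    have hjk : j = k := by
      by_contra hne
      have hlt : k - j < addOrderOf h := by omega
      exact nsmul_ne_zero_of_lt_addOrderOf (by omega) hlt hkj
    exact hTS (by rw [hjk])

theorem isMinZeroSum_replicate_two_neg_add_replicate {g h : G} {k : ℕ}
    (hg : g ∉ AddSubgroup.zmultiples h) (hk0 : k ≠ 0) (hk : k < addOrderOf h)
    (hsum : 2 • g + k • h = 0) :
    IsMinZeroSum (replicate 2 (-g) + replicate (addOrderOf h - k) h) := by
  refine isMinZeroSum_replicate_two_add_replicate (fun hm => hg (by simpa using neg_mem hm))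
    (by omega) ?_
  rw [sub_nsmul h hk.le, addOrderOf_nsmul_eq_zero, zero_add, ← neg_eq_of_add_eq_zero_right hsum,
    neg_neg, smul_neg, neg_add_cancel]

theorem two_mem_lengthsOf_replicate_two_neg {g h : G} {k : ℕ}
    (hg : g ∉ AddSubgroup.zmultiples h) (hk0 : k ≠ 0) (hk : k < addOrderOf h)
    (hsum : 2 • g + k • h = 0) :
    2 ∈ LengthsOf {g, -g, h}
      ((replicate 2 g + replicate 2 (-g)) + replicate (addOrderOf h) h) := by
  refine ⟨{replicate 2 g + replicate k h, replicate 2 (-g) + replicate (addOrderOf h - k) h},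
    by simp, ?_, ?_⟩
  · intro V hV
    simp only [insert_eq_cons, mem_cons, mem_singleton] at hV
    rcases hV with rfl | rfl
    · exact ⟨isMinZeroSum_replicate_two_add_replicate hg hk hsum, fun x hx => by
      rcases mem_add.1 hx with hx | hx <;> simp [eq_of_mem_replicate hx]⟩
    · exact ⟨isMinZeroSum_replicate_two_neg_add_replicate hg hk0 hk hsum, fun x hx => by
      rcases mem_add.1 hx with hx | hx <;> simp [eq_of_mem_replicate hx]⟩
  · rw [insert_eq_cons, sum_cons, sum_singleton]
    exact replicate_add_replicate_add_replicate_add_replicate g (-g) h hk.le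

theorem three_mem_lengthsOf_replicate_two_neg {g h : G} (hg : g ≠ 0) (hh : addOrderOf h ≠ 0) :
    3 ∈ LengthsOf {g, -g, h}
      ((replicate 2 g + replicate 2 (-g)) + replicate (addOrderOf h) h) := by
  refine ⟨{{g, -g}, {g, -g}, replicate (addOrderOf h) h}, by simp, ?_, ?_⟩
  · intro V hV
    simp only [insert_eq_cons, mem_cons, mem_singleton, or_self_left] at hV
    rcases hV with rfl | rfl
    · exact ⟨isMinZeroSum_pair_neg hg, by simp⟩
    · exact ⟨isMinZeroSum_replicate_addOrderOf hh, fun x hx => by simp [eq_of_mem_replicate hx]⟩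
  · simp [replicate_succ, cons_swap]

theorem one_mem_deltaSet {G₀ : Set G} {A : Multiset G} {k : ℕ} (hk : k ∈ LengthsOf G₀ A)
    (hk1 : k + 1 ∈ LengthsOf G₀ A) : 1 ∈ DeltaSet G₀ :=
  ⟨one_pos, A, k, hk, hk1, fun _ _ _ => by omega⟩

theorem sInf_deltaSet_eq_one {G₀ : Set G} (h1 : 1 ∈ DeltaSet G₀) : sInf (DeltaSet G₀) = 1 :=
  le_antisymm (Nat.sInf_le h1) (Nat.sInf_mem ⟨1, h1⟩).1

end ZeroSum

theorem stmt_15_general {G : Type*} [AddCommGroup G] (p : ℕ) (hp : p.Prime)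
    (h : G)
    (hordh : addOrderOf h = 2 * p)
    (g : G) (hg : g ∉ AddSubgroup.zmultiples h)
    (h2g : 2 • g ∈ AddSubgroup.zmultiples h)
    (hordg : addOrderOf g = 2 * p) :
    ∃ k : ℕ, 1 ≤ k ∧ k ≤ 2 * p - 1 ∧
      IsMinZeroSum (Multiset.replicate 2 g + Multiset.replicate k h) ∧
      IsMinZeroSum (Multiset.replicate 2 (-g) + Multiset.replicate (2 * p - k) h) ∧
      (Multiset.replicate 2 g + Multiset.replicate k h) +
          (Multiset.replicate 2 (-g) + Multiset.replicate (2 * p - k) h)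
        = (Multiset.replicate 2 g + Multiset.replicate 2 (-g)) +
            Multiset.replicate (2 * p) h ∧
      (∃ A : Multiset G, 2 ∈ LengthsOf ({g, -g, h} : Set G) A ∧
        3 ∈ LengthsOf ({g, -g, h} : Set G) A) ∧
      sInf (DeltaSet ({g, -g, h} : Set G)) = 1 := by
  have hp2 := hp.two_le
  have hh : addOrderOf h ≠ 0 := by omega
  have h2g0 : 2 • g ≠ 0 := nsmul_ne_zero_of_lt_addOrderOf two_ne_zero (by omega)
  obtain ⟨k, hk, hkh⟩ := exists_lt_addOrderOf_nsmul_eq hh (neg_mem h2g)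
  have hk0 : k ≠ 0 := by
    rintro rfl
    exact h2g0 (neg_eq_zero.1 (by simpa using hkh.symm))
  have hsum : 2 • g + k • h = 0 := by rw [hkh, add_neg_cancel]
  have hlen2 := two_mem_lengthsOf_replicate_two_neg hg hk0 hk hsum
  have hg0 : g ≠ 0 := fun hg0 => hg (hg0 ▸ zero_mem _)
  have hlen3 := three_mem_lengthsOf_replicate_two_neg hg0 hh
  rw [← hordh]
  exact ⟨k, by omega, by omega, isMinZeroSum_replicate_two_add_replicate hg hk hsum,
    isMinZeroSum_replicate_two_neg_add_replicate hg hk0 hk hsum,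
    replicate_add_replicate_add_replicate_add_replicate g (-g) h hk.le, ⟨_, hlen2, hlen3⟩,
    sInf_deltaSet_eq_one (one_mem_deltaSet hlen2 hlen3)⟩

theorem stmt_15 {G : Type*} [AddCommGroup G] [Fintype G] (p : ℕ) (hp : p.Prime)
    (hodd : Odd p) (hexp : AddMonoid.exponent G = 2 * p)
    (G₁ : AddSubgroup G) (h : G)
    (hordh : addOrderOf h = 2 * p)
    (hcompl : IsCompl G₁ (AddSubgroup.zmultiples h))
    (helem : ∀ x ∈ G₁, 2 • x = 0)
    (g : G) (hg : g ∉ AddSubgroup.zmultiples h)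
    (h2g : 2 • g ∈ AddSubgroup.zmultiples h)
    (hordg : addOrderOf g = 2 * p) :
    ∃ k : ℕ, 1 ≤ k ∧ k ≤ 2 * p - 1 ∧
      IsMinZeroSum (Multiset.replicate 2 g + Multiset.replicate k h) ∧
      IsMinZeroSum (Multiset.replicate 2 (-g) + Multiset.replicate (2 * p - k) h) ∧
      (Multiset.replicate 2 g + Multiset.replicate k h) +
          (Multiset.replicate 2 (-g) + Multiset.replicate (2 * p - k) h)
        = (Multiset.replicate 2 g + Multiset.replicate 2 (-g)) +
            Multiset.replicate (2 * p) h ∧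
      (∃ A : Multiset G, 2 ∈ LengthsOf ({g, -g, h} : Set G) A ∧
        3 ∈ LengthsOf ({g, -g, h} : Set G) A) ∧
      sInf (DeltaSet ({g, -g, h} : Set G)) = 1 :=
  stmt_15_general p hp h hordh g hg h2g hordg
end
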